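/- Let (l, r) be a Cantor-set construction with Cantor set C. Then there exists a hole-decreasing Cantor-set construction (l', r') with the same initial interval whose associated Cantor set equals C, and such that for every x ≥ 0, if (l, r) has density ratio at least x then (l', r') also has density ratio at least x. -/
import Mathlib


open Pointwise

/-- A Cantor-set construction on `ℝ`: functions `l r : ℕ → ℝ` (only indices `i ≥ 1` matter)
with, for every `i ≥ 1`: `l i < r i`, `l (2i) = l i`, `r (2i+1) = r i`, `r (2i) < l (2i+1)`.
The interval `I_i` is `[l i, r i]` and the gap `G_i` is `(r (2i), l (2i+1))`. -/
structure CantorConstr where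
  l : ℕ → ℝ
  r : ℕ → ℝ
  lt : ∀ i : ℕ, 1 ≤ i → l i < r i
  left_eq : ∀ i : ℕ, 1 ≤ i → l (2 * i) = l i
  right_eq : ∀ i : ℕ, 1 ≤ i → r (2 * i + 1) = r i
  gap_lt : ∀ i : ℕ, 1 ≤ i → r (2 * i) < l (2 * i + 1)

/-- The Cantor set associated to a construction: the initial interval minus all the gaps. -/
def CantorConstr.cantorSet (c : CantorConstr) : Set ℝ :=
  Set.Icc (c.l 1) (c.r 1) \ ⋃ (i : ℕ) (_ : 1 ≤ i), Set.Ioo (c.r (2 * i)) (c.l (2 * i + 1))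

/-- The construction has density ratio at least `x`. -/
def CantorConstr.densityGE (c : CantorConstr) (x : ℝ) : Prop :=
  ∀ i : ℕ, 1 ≤ i →
    min (c.r (2 * i) - c.l (2 * i)) (c.r (2 * i + 1) - c.l (2 * i + 1)) ≥
      x * (c.l (2 * i + 1) - c.r (2 * i))

/-- The length of the gap `G_i`. -/
def CantorConstr.gapLen (c : CantorConstr) (i : ℕ) : ℝ := c.l (2 * i + 1) - c.r (2 * i)

/-- The construction is hole-decreasing. -/
def CantorConstr.holeDecr (c : CantorConstr) : Prop :=
  ∀ i : ℕ, 1 ≤ i → c.gapLen (2 * i) ≤ c.gapLen i ∧ c.gapLen (2 * i + 1) ≤ c.gapLen i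

lemma CC.div2_pow (m k : ℕ) : m / 2 / 2 ^ k = m / 2 ^ (k + 1) := by
  rw [Nat.div_div_eq_div_mul, pow_succ']

lemma CC.pow_div2 (m k : ℕ) : m / 2 ^ k / 2 = m / 2 ^ (k + 1) := by
  rw [Nat.div_div_eq_div_mul, pow_succ]

namespace CantorConstr
variable (c : CantorConstr)

lemma nest {i : ℕ} (h : 1 ≤ i) :
    c.l i ≤ c.l (2 * i) ∧ c.r (2 * i) ≤ c.r i ∧ c.l i ≤ c.l (2 * i + 1) ∧
      c.r (2 * i + 1) ≤ c.r i := by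
  have h1 := c.left_eq i h
  have h2 := c.right_eq i h
  have h3 := c.gap_lt i h
  have h4 := c.lt (2 * i + 1) (by omega)
  have h5 := c.lt (2 * i) (by omega)
  refine ⟨le_of_eq h1.symm, ?_, ?_, le_of_eq h2⟩ <;> linarith

lemma step {j : ℕ} (h2 : 2 ≤ j) : c.l (j / 2) ≤ c.l j ∧ c.r j ≤ c.r (j / 2) := by
  obtain ⟨k, hk1, hk2, hk3⟩ : ∃ k, 1 ≤ k ∧ (j = 2 * k ∨ j = 2 * k + 1) ∧ j / 2 = k :=
    ⟨j / 2, by omega, by omega, rfl⟩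
  have hn := c.nest hk1
  rw [hk3]
  rcases hk2 with h | h <;> rw [h] <;> exact ⟨by tauto, by tauto⟩

lemma anc (k : ℕ) : ∀ i : ℕ, 1 ≤ i / 2 ^ k → c.l (i / 2 ^ k) ≤ c.l i ∧ c.r i ≤ c.r (i / 2 ^ k) := by
  induction k with
  | zero => intro i h; simp
  | succ k ih =>
    intro i h
    have hj : i / 2 ^ (k + 1) = i / 2 ^ k / 2 := (CC.pow_div2 i k).symm
    rw [hj] at h ⊢
    have h2 : 2 ≤ i / 2 ^ k := by omega
    have ihi := ih i (by omega)
    have hs := c.step h2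
    exact ⟨le_trans hs.1 ihi.1, le_trans ihi.2 hs.2⟩

end CantorConstr

lemma CC.root : ∀ i : ℕ, 1 ≤ i → ∃ k, i / 2 ^ k = 1 := by
  intro i
  induction i using Nat.strong_induction_on with
  | _ i ih =>
    intro hi
    rcases Nat.lt_or_ge i 2 with h | h
    · exact ⟨0, by omega⟩
    · obtain ⟨k, hk⟩ := ih (i / 2) (by omega) (by omega)
      exact ⟨k + 1, by rw [← CC.div2_pow, hk]⟩

namespace CantorConstr
variable (c : CantorConstr)

lemma root_le {i : ℕ} (h : 1 ≤ i) : c.l 1 ≤ c.l i ∧ c.r i ≤ c.r 1 := by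
  obtain ⟨k, hk⟩ := CC.root i h
  have := c.anc k i (by rw [hk])
  rw [hk] at this; exact this

end CantorConstr




def CC.Tri (p q : ℕ) : Prop :=
  (∃ k, p / 2 ^ k = q) ∨ (∃ k, q / 2 ^ k = p) ∨
  (∃ a k₁ k₂, 1 ≤ a ∧ (p / 2 ^ k₁ = 2 * a ∧ q / 2 ^ k₂ = 2 * a + 1 ∨
    p / 2 ^ k₁ = 2 * a + 1 ∧ q / 2 ^ k₂ = 2 * a))

lemma CC.tri_symm {p q : ℕ} (h : CC.Tri p q) : CC.Tri q p := by
  rcases h with h | h | ⟨a, k1, k2, ha, h | h⟩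
  · exact Or.inr (Or.inl h)
  · exact Or.inl h
  · exact Or.inr (Or.inr ⟨a, k2, k1, ha, Or.inr ⟨h.2, h.1⟩⟩)
  · exact Or.inr (Or.inr ⟨a, k2, k1, ha, Or.inl ⟨h.2, h.1⟩⟩)

lemma CC.tri_aux : ∀ n p q : ℕ, p + q ≤ n → 1 ≤ p → 1 ≤ q → p ≤ q → CC.Tri p q := by
  intro n
  induction n with
  | zero => intro p q h hp hq _; omega
  | succ n ih =>
    intro p q hn hp hq hpq
    rcases eq_or_lt_of_le hpq with rfl | hlt
    · exact Or.inl ⟨0, by simpa using rfl⟩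
    · -- p < q, so q ≥ 2
      have hq2 : 2 ≤ q := by omega
      have hq' : 1 ≤ q / 2 := by omega
      have key : CC.Tri p (q / 2) := by
        rcases Nat.le_total p (q / 2) with h | h
        · exact ih p (q / 2) (by omega) hp hq' h
        · exact CC.tri_symm (ih (q / 2) p (by omega) hq' hp h)
      rcases key with ⟨k, hk⟩ | ⟨k, hk⟩ | ⟨a, k1, k2, ha, hcase⟩
      · -- p / 2^k = q / 2
        rcases k with _ | k'
        · -- p = q / 2 : q/2^1 = p
          refine Or.inr (Or.inl ⟨1, ?_⟩)
          simp at hk; omega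
        · -- t := p / 2^k', t / 2 = q / 2
          have ht : p / 2 ^ k' / 2 = q / 2 := by rw [Nat.div_div_eq_div_mul, ← pow_succ]; exact hk
          set t := p / 2 ^ k' with htdef
          have ht2 : 2 ≤ t := by omega
          have hcases : t = q ∨ (t = 2 * (q / 2) ∧ q = 2 * (q / 2) + 1) ∨
              (t = 2 * (q / 2) + 1 ∧ q = 2 * (q / 2)) := by omega
          rcases hcases with h | ⟨h1, h2⟩ | ⟨h1, h2⟩
          · exact Or.inl ⟨k', by rw [← htdef, h]⟩
          · exact Or.inr (Or.inr ⟨q / 2, k', 0, by omega, Or.inl ⟨by omega, by simpa using h2⟩⟩)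
          · exact Or.inr (Or.inr ⟨q / 2, k', 0, by omega, Or.inr ⟨by omega, by simpa using h2⟩⟩)
      · -- q / 2 / 2^k = p
        exact Or.inr (Or.inl ⟨k + 1, by rw [← CC.div2_pow]; exact hk⟩)
      · refine Or.inr (Or.inr ⟨a, k1, k2 + 1, ha, ?_⟩)
        rw [← CC.div2_pow]
        exact hcase

lemma CC.tri {p q : ℕ} (hp : 1 ≤ p) (hq : 1 ≤ q) : CC.Tri p q := by
  rcases Nat.le_total p q with h | h
  · exact CC.tri_aux (p + q) p q le_rfl hp hq h
  · exact CC.tri_symm (CC.tri_aux (q + p) q p le_rfl hq hp h)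


section
variable (c : CantorConstr)
namespace CantorConstr

/-- closed gaps are strictly separated -/
lemma sep {i j : ℕ} (hi : 1 ≤ i) (hj : 1 ≤ j) (hij : i ≠ j) :
    c.l (2 * i + 1) < c.r (2 * j) ∨ c.l (2 * j + 1) < c.r (2 * i) := by
  have base : ∀ m n : ℕ, 1 ≤ m → 1 ≤ n → (∃ k, m / 2 ^ k = n) → m ≠ n →
      c.l (2 * m + 1) < c.r (2 * n) ∨ c.l (2 * n + 1) < c.r (2 * m) := by
    intro m n hm hn ⟨k, hk⟩ hmn
    rcases k with _ | k'
    · simp at hk; omega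
    · have ht : m / 2 ^ k' / 2 = n := by rw [Nat.div_div_eq_div_mul, ← pow_succ]; exact hk
      set t := m / 2 ^ k' with htdef
      have ht1 : 1 ≤ t ∧ (t = 2 * n ∨ t = 2 * n + 1) := by omega
      have hanc := c.anc k' m (by rw [← htdef]; omega)
      rw [← htdef] at hanc
      have h1 := c.lt (2 * m + 1) (by omega)
      have h2 := c.right_eq m hm
      have h3 := c.left_eq m hm
      have h4 := c.lt (2 * m) (by omega)
      rcases ht1.2 with h | h
      · -- t = 2n : I_m ⊆ I_{2n}, gap m strictly left of gap n
        left
        have : c.r m ≤ c.r (2 * n) := h ▸ hanc.2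
        linarith
      · right
        have : c.l (2 * n + 1) ≤ c.l m := h ▸ hanc.1
        linarith
  rcases CC.tri hi hj with h | h | ⟨a, k1, k2, ha, hc⟩
  · exact base i j hi hj h hij
  · rcases base j i hj hi h (Ne.symm hij) with h' | h'
    exacts [Or.inr h', Or.inl h']
  · have hanc1 := c.anc k1 i (by rcases hc with ⟨h, _⟩ | ⟨h, _⟩ <;> rw [h] <;> omega)
    have hanc2 := c.anc k2 j (by rcases hc with ⟨_, h⟩ | ⟨_, h⟩ <;> rw [h] <;> omega)
    have hga := c.gap_lt a ha
    have h1 := c.lt (2 * i + 1) (by omega)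
    have h2 := c.right_eq i hi
    have h3 := c.left_eq i hi
    have h4 := c.lt (2 * i) (by omega)
    have h5 := c.lt (2 * j + 1) (by omega)
    have h6 := c.right_eq j hj
    have h7 := c.left_eq j hj
    have h8 := c.lt (2 * j) (by omega)
    rcases hc with ⟨hA, hB⟩ | ⟨hA, hB⟩
    · rw [hA] at hanc1; rw [hB] at hanc2
      have hn2a := (c.nest ha).2.1  -- r(2a) ≤ r a (unused)
      have hn2a1 := (c.nest ha).2.2.1
      left; linarith [hanc1.2, hanc2.1]
    · rw [hA] at hanc1; rw [hB] at hanc2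
      right; linarith [hanc1.1, hanc2.2]

lemma no_cross {i m : ℕ} (hi : 1 ≤ i) (hm : 1 ≤ m)
    (h1 : c.l i < c.l (2 * m + 1)) (h2 : c.r (2 * i) < c.r (2 * m + 1))
    (h3 : c.l (2 * m + 1) < c.r (2 * i)) : False := by
  have hp : (1 : ℕ) ≤ 2 * i := by omega
  have hq : (1 : ℕ) ≤ 2 * m + 1 := by omega
  have hne : 2 * i ≠ 2 * m + 1 := by omega
  have hli := c.left_eq i hi
  rcases CC.tri hp hq with ⟨k, hk⟩ | ⟨k, hk⟩ | ⟨a, k1, k2, ha, hc⟩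
  · have := c.anc k (2 * i) (by rw [hk]; omega)
    rw [hk] at this
    linarith [this.1]
  · have := c.anc k (2 * m + 1) (by rw [hk]; omega)
    rw [hk] at this
    linarith [this.2]
  · have hanc1 := c.anc k1 (2 * i) (by rcases hc with ⟨h, _⟩ | ⟨h, _⟩ <;> rw [h] <;> omega)
    have hanc2 := c.anc k2 (2 * m + 1) (by rcases hc with ⟨_, h⟩ | ⟨_, h⟩ <;> rw [h] <;> omega)
    have hga := c.gap_lt a ha
    rcases hc with ⟨hA, hB⟩ | ⟨hA, hB⟩
    · rw [hA] at hanc1; rw [hB] at hanc2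
      have := (c.nest ha).2.2.1
      linarith [hanc1.2, hanc2.1]
    · rw [hA] at hanc1; rw [hB] at hanc2
      have := (c.nest ha).2.2.1
      linarith [hanc1.1, hanc2.2]

end CantorConstr
end

section
namespace CantorConstr
variable (c : CantorConstr)
open MeasureTheory

lemma gapLen_pos {i : ℕ} (hi : 1 ≤ i) : 0 < c.gapLen i :=
  sub_pos.mpr (c.gap_lt i hi)

lemma gap_subset {i : ℕ} (hi : 1 ≤ i) :
    Set.Ioo (c.r (2 * i)) (c.l (2 * i + 1)) ⊆ Set.Icc (c.l 1) (c.r 1) := by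
  have h1 := (c.root_le (i := 2 * i) (by omega)).1
  have h2 := (c.root_le (i := 2 * i + 1) (by omega)).2
  have h3 := c.lt (2 * i) (by omega)
  have h4 := c.lt (2 * i + 1) (by omega)
  have h5 := c.left_eq i hi
  intro x hx
  exact ⟨by rcases hx with ⟨h, _⟩; linarith, by rcases hx with ⟨_, h⟩; linarith⟩

lemma gap_disjoint {i j : ℕ} (hi : 1 ≤ i) (hj : 1 ≤ j) (hij : i ≠ j) :
    Disjoint (Set.Ioo (c.r (2 * i)) (c.l (2 * i + 1)))
      (Set.Ioo (c.r (2 * j)) (c.l (2 * j + 1))) := by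
  rw [Set.disjoint_left]
  intro x hx hx'
  rcases c.sep hi hj hij with h | h
  · rcases hx with ⟨_, h2⟩; rcases hx' with ⟨h3, _⟩; linarith
  · rcases hx with ⟨h2, _⟩; rcases hx' with ⟨_, h3⟩; linarith

lemma finGE (ε : ℝ) (hε : 0 < ε) : {i : ℕ | 1 ≤ i ∧ ε ≤ c.gapLen i}.Finite := by
  by_contra hinf
  have hinf : {i : ℕ | 1 ≤ i ∧ ε ≤ c.gapLen i}.Infinite := hinf
  obtain ⟨N, hN⟩ := exists_nat_gt ((c.r 1 - c.l 1) / ε)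
  obtain ⟨t, hts, htc⟩ := hinf.exists_subset_card_eq N
  have hdisj : (t : Set ℕ).PairwiseDisjoint
      (fun i => Set.Ioo (c.r (2 * i)) (c.l (2 * i + 1))) := by
    intro i hi j hj hij
    exact c.gap_disjoint (hts hi).1 (hts hj).1 hij
  have hsum := measure_biUnion_finset hdisj
    (fun i _ => (measurableSet_Ioo : MeasurableSet (Set.Ioo (c.r (2*i)) (c.l (2*i+1)))))
    (μ := volume)
  have hsub : (⋃ i ∈ t, Set.Ioo (c.r (2 * i)) (c.l (2 * i + 1))) ⊆
      Set.Icc (c.l 1) (c.r 1) := by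
    refine Set.iUnion₂_subset fun i hi => c.gap_subset (hts hi).1
  have hle : ∑ i ∈ t, volume (Set.Ioo (c.r (2 * i)) (c.l (2 * i + 1))) ≤
      ENNReal.ofReal (c.r 1 - c.l 1) := by
    rw [← hsum, ← Real.volume_Icc]
    exact measure_mono hsub
  have h1 : ∀ i ∈ t, ENNReal.ofReal ε ≤ volume (Set.Ioo (c.r (2 * i)) (c.l (2 * i + 1))) := by
    intro i hi
    rw [Real.volume_Ioo]
    exact ENNReal.ofReal_le_ofReal (hts hi).2
  have h2 : t.card • ENNReal.ofReal ε ≤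
      ∑ i ∈ t, volume (Set.Ioo (c.r (2 * i)) (c.l (2 * i + 1))) :=
    Finset.card_nsmul_le_sum t _ _ h1
  rw [htc, nsmul_eq_mul] at h2
  have h3 : ENNReal.ofReal (N * ε) ≤ ENNReal.ofReal (c.r 1 - c.l 1) := by
    rw [ENNReal.ofReal_mul (by positivity), ENNReal.ofReal_natCast]
    exact le_trans h2 hle
  have h4 : (N : ℝ) * ε ≤ c.r 1 - c.l 1 := by
    have hlt := c.lt 1 le_rfl
    rwa [ENNReal.ofReal_le_ofReal_iff (by linarith)] at h3
  have h5 : (c.r 1 - c.l 1) / ε < N := hN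
  rw [div_lt_iff₀ hε] at h5
  linarith

/-- membership of gap `i` inside the open interval `(a,b)` -/
def inS (a b : ℝ) (i : ℕ) : Prop := 1 ≤ i ∧ a ≤ c.r (2 * i) ∧ c.l (2 * i + 1) ≤ b

lemma exists_max {a b : ℝ} (hne : ∃ i, c.inS a b i) :
    ∃ i, c.inS a b i ∧ ∀ j, c.inS a b j → c.gapLen j ≤ c.gapLen i := by
  classical
  obtain ⟨i₀, hi₀⟩ := hne
  have hε : 0 < c.gapLen i₀ := c.gapLen_pos hi₀.1
  have hfin := c.finGE (c.gapLen i₀) hε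
  set T := hfin.toFinset.filter (fun i => c.inS a b i) with hT
  have hi₀T : i₀ ∈ T := by
    rw [hT, Finset.mem_filter, Set.Finite.mem_toFinset]
    exact ⟨⟨hi₀.1, le_rfl⟩, hi₀⟩
  obtain ⟨i, hiT, hmax⟩ := T.exists_max_image (fun i => c.gapLen i) ⟨i₀, hi₀T⟩
  rw [hT, Finset.mem_filter] at hiT
  refine ⟨i, hiT.2, ?_⟩
  intro j hj
  by_cases hjc : c.gapLen i₀ ≤ c.gapLen j
  · refine hmax j ?_
    rw [hT, Finset.mem_filter, Set.Finite.mem_toFinset]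
    exact ⟨⟨hj.1, hjc⟩, hj⟩
  · exact le_trans (le_of_not_ge hjc) (hmax i₀ hi₀T)

end CantorConstr
end
section
namespace CantorConstr
variable (c : CantorConstr)

open Classical in
noncomputable def pick (a b : ℝ) : ℕ :=
  if h : ∃ i, c.inS a b i then Classical.choose (c.exists_max h) else 1

lemma pick_spec {a b : ℝ} (h : ∃ i, c.inS a b i) :
    c.inS a b (c.pick a b) ∧ ∀ j, c.inS a b j → c.gapLen j ≤ c.gapLen (c.pick a b) := by
  rw [pick, dif_pos h]
  exact Classical.choose_spec (c.exists_max h)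

def isL (a : ℝ) : Prop := a = c.l 1 ∨ ∃ m, 1 ≤ m ∧ a = c.l (2 * m + 1)

def isR (b : ℝ) : Prop := b = c.r 1 ∨ ∃ m, 1 ≤ m ∧ b = c.r (2 * m)

lemma exists_gap {a b : ℝ} (ha : c.isL a) (hb : c.isR b) (hab : a < b) :
    ∃ i, c.inS a b i := by
  rcases ha with rfl | ⟨m, hm, rfl⟩ <;> rcases hb with rfl | ⟨i₀, hi₀, rfl⟩
  · refine ⟨1, le_rfl, ?_, ?_⟩
    · have := c.left_eq 1 le_rfl
      have := c.lt 2 (by omega)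
      simp only [mul_one] at *
      linarith
    · have := c.right_eq 1 le_rfl
      have := c.lt 3 (by omega)
      simp only [mul_one] at *
      linarith
  · refine ⟨2 * i₀, by omega, ?_, ?_⟩
    · have h1 := (c.root_le (i := 2 * (2 * i₀)) (by omega)).1
      have h2 := c.lt (2 * (2 * i₀)) (by omega)
      linarith
    · have h1 := c.lt (2 * (2 * i₀) + 1) (by omega)
      have h2 := c.right_eq (2 * i₀) (by omega)
      linarith
  · refine ⟨2 * m + 1, by omega, ?_, ?_⟩
    · have h1 := c.left_eq (2 * m + 1) (by omega)
      have h2 := c.lt (2 * (2 * m + 1)) (by omega)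
      linarith
    · have h1 := c.lt (2 * (2 * m + 1) + 1) (by omega)
      have h2 := c.right_eq (2 * m + 1) (by omega)
      have h3 := (c.root_le (i := 2 * m + 1) (by omega)).2
      linarith
  · by_cases hcase : c.l (2 * m + 1) ≤ c.l i₀
    · refine ⟨2 * i₀, by omega, ?_, ?_⟩
      · have h1 := c.left_eq i₀ hi₀
        have h2 := c.left_eq (2 * i₀) (by omega)
        have h3 := c.lt (2 * (2 * i₀)) (by omega)
        linarith
      · have h1 := c.lt (2 * (2 * i₀) + 1) (by omega)
        have h2 := c.right_eq (2 * i₀) (by omega)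
        linarith
    · push_neg at hcase
      have hr : c.r (2 * m + 1) ≤ c.r (2 * i₀) := by
        by_contra hr
        push_neg at hr
        exact c.no_cross hi₀ hm hcase hr hab
      refine ⟨2 * m + 1, by omega, ?_, ?_⟩
      · have h1 := c.left_eq (2 * m + 1) (by omega)
        have h2 := c.lt (2 * (2 * m + 1)) (by omega)
        linarith
      · have h1 := c.lt (2 * (2 * m + 1) + 1) (by omega)
        have h2 := c.right_eq (2 * m + 1) (by omega)
        linarith

lemma strictL {a : ℝ} (ha : c.isL a) {i : ℕ} (hi : 1 ≤ i) (h : a ≤ c.r (2 * i)) :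
    a < c.r (2 * i) := by
  rcases ha with rfl | ⟨m, hm, rfl⟩
  · have h1 := (c.root_le (i := 2 * i) (by omega)).1
    have h2 := c.lt (2 * i) (by omega)
    linarith
  · rcases eq_or_ne i m with rfl | hne
    · exact absurd h (not_le.mpr (c.gap_lt i hi))
    · rcases c.sep hm hi (fun he => hne (he.symm)) with hs | hs
      · exact hs
      · have h2 := c.gap_lt i hi
        have h3 := c.gap_lt m hm
        linarith

lemma strictR {b : ℝ} (hb : c.isR b) {i : ℕ} (hi : 1 ≤ i) (h : c.l (2 * i + 1) ≤ b) :
    c.l (2 * i + 1) < b := by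
  rcases hb with rfl | ⟨m, hm, rfl⟩
  · have h1 := (c.root_le (i := 2 * i + 1) (by omega)).2
    have h2 := c.lt (2 * i + 1) (by omega)
    linarith
  · rcases eq_or_ne i m with rfl | hne
    · exact absurd h (not_le.mpr (c.gap_lt i hi))
    · rcases c.sep hi hm hne with hs | hs
      · exact hs
      · have h2 := c.gap_lt i hi
        have h3 := c.gap_lt m hm
        linarith

lemma dens_min {x : ℝ} (hd : c.densityGE x) {i : ℕ} (hi : 1 ≤ i) :
    x * c.gapLen i ≤ c.r (2 * i) - c.l i ∧ x * c.gapLen i ≤ c.r i - c.l (2 * i + 1) := by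
  have h := hd i hi
  have h1 := c.left_eq i hi
  have h2 := c.right_eq i hi
  rw [ge_iff_le, le_min_iff] at h
  constructor
  · calc x * c.gapLen i ≤ c.r (2 * i) - c.l (2 * i) := h.1
      _ = c.r (2 * i) - c.l i := by rw [h1]
  · calc x * c.gapLen i ≤ c.r (2 * i + 1) - c.l (2 * i + 1) := h.2
      _ = c.r i - c.l (2 * i + 1) := by rw [h2]

lemma dens_side_L {x : ℝ} (hx : 0 ≤ x) (hd : c.densityGE x) {a : ℝ} {i : ℕ} (hi : 1 ≤ i)
    (hstrict : a < c.r (2 * i))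
    (hgood : a = c.l 1 ∨ ∃ m, 1 ≤ m ∧ a = c.l (2 * m + 1) ∧ c.gapLen i ≤ c.gapLen m) :
    x * c.gapLen i ≤ c.r (2 * i) - a := by
  rcases hgood with rfl | ⟨m, hm, rfl, hlen⟩
  · have h1 := (c.root_le hi).1
    have h2 := (c.dens_min hd hi).1
    linarith
  · by_cases hcase : c.l (2 * m + 1) ≤ c.l i
    · have h2 := (c.dens_min hd hi).1
      linarith
    · push_neg at hcase
      have hr : c.r (2 * m + 1) ≤ c.r (2 * i) := by
        by_contra hr
        push_neg at hr
        exact c.no_cross hi hm hcase hr hstrict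
      have h2 := (c.dens_min hd hm).2
      have h3 := c.right_eq m hm
      have hxl : x * c.gapLen i ≤ x * c.gapLen m := by nlinarith
      linarith

lemma dens_side_R {x : ℝ} (hx : 0 ≤ x) (hd : c.densityGE x) {b : ℝ} {i : ℕ} (hi : 1 ≤ i)
    (hstrict : c.l (2 * i + 1) < b)
    (hgood : b = c.r 1 ∨ ∃ m, 1 ≤ m ∧ b = c.r (2 * m) ∧ c.gapLen i ≤ c.gapLen m) :
    x * c.gapLen i ≤ b - c.l (2 * i + 1) := by
  rcases hgood with rfl | ⟨m, hm, rfl, hlen⟩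
  · have h1 := (c.root_le hi).2
    have h2 := (c.dens_min hd hi).2
    linarith
  · by_cases hcase : c.r i ≤ c.r (2 * m)
    · have h2 := (c.dens_min hd hi).2
      linarith
    · push_neg at hcase
      have hl : c.l (2 * i + 1) ≤ c.l m := by
        by_contra hl
        push_neg at hl
        refine c.no_cross hm hi hl ?_ hstrict
        rwa [c.right_eq i hi]
      have h2 := (c.dens_min hd hm).1
      have h3 := c.left_eq m hm
      have hxl : x * c.gapLen i ≤ x * c.gapLen m := by nlinarith
      linarith

end CantorConstr
end
section
namespace CantorConstr

noncomputable def F (c : CantorConstr) : ℕ → ℝ × ℝ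
  | 0 => (c.l 1, c.r 1)
  | 1 => (c.l 1, c.r 1)
  | (n + 2) =>
    let p := F c ((n + 2) / 2)
    let i := c.pick p.1 p.2
    if n % 2 = 0 then (p.1, c.r (2 * i)) else (c.l (2 * i + 1), p.2)
  decreasing_by omega

variable (c : CantorConstr)

lemma F_even {n : ℕ} (h : 1 ≤ n) :
    c.F (2 * n) = ((c.F n).1, c.r (2 * c.pick (c.F n).1 (c.F n).2)) := by
  have h2 : 2 * n = (2 * n - 2) + 2 := by omega
  rw [h2, F]
  have hm : (2 * n - 2) % 2 = 0 := by omega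
  have hd : (2 * n - 2 + 2) / 2 = n := by omega
  rw [hd, if_pos hm]

lemma F_odd {n : ℕ} (h : 1 ≤ n) :
    c.F (2 * n + 1) = (c.l (2 * c.pick (c.F n).1 (c.F n).2 + 1), (c.F n).2) := by
  have h2 : 2 * n + 1 = (2 * n - 1) + 2 := by omega
  rw [h2, F]
  have hm : ¬ (2 * n - 1) % 2 = 0 := by omega
  have hd : (2 * n - 1 + 2) / 2 = n := by omega
  rw [hd, if_neg hm]

def Inv (a b : ℝ) : Prop :=
  a < b ∧
  (a = c.l 1 ∨ ∃ m, 1 ≤ m ∧ a = c.l (2 * m + 1) ∧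
      ∀ j, c.inS a b j → c.gapLen j ≤ c.gapLen m) ∧
  (b = c.r 1 ∨ ∃ m, 1 ≤ m ∧ b = c.r (2 * m) ∧
      ∀ j, c.inS a b j → c.gapLen j ≤ c.gapLen m)

variable {c}

lemma Inv.isL' {a b : ℝ} (h : c.Inv a b) : c.isL a := by
  rcases h.2.1 with h | ⟨m, hm, ha, _⟩
  · exact Or.inl h
  · exact Or.inr ⟨m, hm, ha⟩

lemma Inv.isR' {a b : ℝ} (h : c.Inv a b) : c.isR b := by
  rcases h.2.2 with h | ⟨m, hm, hb, _⟩
  · exact Or.inl h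
  · exact Or.inr ⟨m, hm, hb⟩

lemma Inv.nonempty {a b : ℝ} (h : c.Inv a b) : ∃ i, c.inS a b i :=
  c.exists_gap (h.isL') (h.isR') h.1

lemma Inv.pick_mem {a b : ℝ} (h : c.Inv a b) : c.inS a b (c.pick a b) :=
  (c.pick_spec (h.nonempty)).1

lemma Inv.pick_max {a b : ℝ} (h : c.Inv a b) :
    ∀ j, c.inS a b j → c.gapLen j ≤ c.gapLen (c.pick a b) :=
  (c.pick_spec (h.nonempty)).2

lemma Inv.pick_one_le {a b : ℝ} (h : c.Inv a b) : 1 ≤ c.pick a b :=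
  (h.pick_mem).1

lemma Inv.strict_left {a b : ℝ} (h : c.Inv a b) : a < c.r (2 * c.pick a b) :=
  c.strictL (h.isL') (h.pick_one_le) (h.pick_mem).2.1

lemma Inv.strict_right {a b : ℝ} (h : c.Inv a b) : c.l (2 * c.pick a b + 1) < b :=
  c.strictR (h.isR') (h.pick_one_le) (h.pick_mem).2.2

lemma Inv.subset_left {a b : ℝ} (h : c.Inv a b) :
    ∀ j, c.inS a (c.r (2 * c.pick a b)) j → c.inS a b j := by
  intro j hj
  have h1 := c.gap_lt _ (h.pick_one_le)
  have h2 := (h.pick_mem).2.2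
  exact ⟨hj.1, hj.2.1, by linarith [hj.2.2]⟩

lemma Inv.subset_right {a b : ℝ} (h : c.Inv a b) :
    ∀ j, c.inS (c.l (2 * c.pick a b + 1)) b j → c.inS a b j := by
  intro j hj
  have h1 := c.gap_lt _ (h.pick_one_le)
  have h2 := (h.pick_mem).2.1
  exact ⟨hj.1, by linarith [hj.2.1], hj.2.2⟩

lemma Inv.pick_not_left {a b : ℝ} (h : c.Inv a b) :
    ∀ j, c.inS a (c.r (2 * c.pick a b)) j → j ≠ c.pick a b := by
  intro j hj he
  have h1 := c.gap_lt _ (h.pick_one_le)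
  rw [he] at hj
  linarith [hj.2.2]

lemma Inv.pick_not_right {a b : ℝ} (h : c.Inv a b) :
    ∀ j, c.inS (c.l (2 * c.pick a b + 1)) b j → j ≠ c.pick a b := by
  intro j hj he
  have h1 := c.gap_lt _ (h.pick_one_le)
  rw [he] at hj
  linarith [hj.2.1]

lemma Inv.left {a b : ℝ} (h : c.Inv a b) : c.Inv a (c.r (2 * c.pick a b)) := by
  refine ⟨h.strict_left, ?_, ?_⟩
  · rcases h.2.1 with h' | ⟨m, hm, ha, hmax⟩
    · exact Or.inl h'
    · exact Or.inr ⟨m, hm, ha, fun j hj => hmax j (h.subset_left j hj)⟩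
  · exact Or.inr ⟨c.pick a b, h.pick_one_le, rfl,
      fun j hj => h.pick_max j (h.subset_left j hj)⟩

lemma Inv.right {a b : ℝ} (h : c.Inv a b) : c.Inv (c.l (2 * c.pick a b + 1)) b := by
  refine ⟨h.strict_right, ?_, ?_⟩
  · exact Or.inr ⟨c.pick a b, h.pick_one_le, rfl,
      fun j hj => h.pick_max j (h.subset_right j hj)⟩
  · rcases h.2.2 with h' | ⟨m, hm, hb, hmax⟩
    · exact Or.inl h'
    · exact Or.inr ⟨m, hm, hb, fun j hj => hmax j (h.subset_right j hj)⟩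

variable (c)

lemma invF : ∀ n : ℕ, 1 ≤ n → c.Inv (c.F n).1 (c.F n).2 := by
  intro n
  induction n using Nat.strong_induction_on with
  | _ n ih =>
    intro hn
    rcases Nat.lt_or_ge n 2 with h2 | h2
    · have hn1 : n = 1 := by omega
      subst hn1
      rw [show c.F 1 = (c.l 1, c.r 1) by rw [F]]
      exact ⟨c.lt 1 le_rfl, Or.inl rfl, Or.inl rfl⟩
    · have hk : 1 ≤ n / 2 := by omega
      have ihk := ih (n / 2) (by omega) hk
      rcases Nat.even_or_odd n with ⟨k, hkk⟩ | ⟨k, hkk⟩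
      · have hkn : n = 2 * (n / 2) := by omega
        rw [hkn, c.F_even hk]
        exact ihk.left
      · have hkn : n = 2 * (n / 2) + 1 := by omega
        rw [hkn, c.F_odd hk]
        exact ihk.right

end CantorConstr
end
section
namespace CantorConstr
variable (c : CantorConstr)

/-- index of the gap chosen at node `n` -/
noncomputable def pk (n : ℕ) : ℕ := c.pick (c.F n).1 (c.F n).2

lemma F_even' {n : ℕ} (h : 1 ≤ n) :
    c.F (2 * n) = ((c.F n).1, c.r (2 * c.pk n)) := c.F_even h

lemma F_odd' {n : ℕ} (h : 1 ≤ n) :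
    c.F (2 * n + 1) = (c.l (2 * c.pk n + 1), (c.F n).2) := c.F_odd h

lemma F_one : c.F 1 = (c.l 1, c.r 1) := by rw [F]

lemma pk_one_le {n : ℕ} (h : 1 ≤ n) : 1 ≤ c.pk n := (c.invF n h).pick_one_le

/-- the new, hole-decreasing construction -/
noncomputable def mk' : CantorConstr where
  l n := (c.F n).1
  r n := (c.F n).2
  lt n hn := (c.invF n hn).1
  left_eq n hn := by
    show (c.F (2 * n)).1 = (c.F n).1
    rw [c.F_even' hn]
  right_eq n hn := by
    show (c.F (2 * n + 1)).2 = (c.F n).2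
    rw [c.F_odd' hn]
  gap_lt n hn := by
    show (c.F (2 * n)).2 < (c.F (2 * n + 1)).1
    rw [c.F_even' hn, c.F_odd' hn]
    exact c.gap_lt _ (c.pk_one_le hn)

lemma mk'_l (n : ℕ) : (c.mk').l n = (c.F n).1 := rfl
lemma mk'_r (n : ℕ) : (c.mk').r n = (c.F n).2 := rfl

lemma mk'_gapLen {n : ℕ} (hn : 1 ≤ n) : (c.mk').gapLen n = c.gapLen (c.pk n) := by
  unfold gapLen
  rw [mk'_l, mk'_r, c.F_even' hn, c.F_odd' hn]

lemma pk_mem {n : ℕ} (hn : 1 ≤ n) : c.inS (c.F n).1 (c.F n).2 (c.pk n) :=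
  (c.invF n hn).pick_mem

lemma pk_child_le {n : ℕ} (hn : 1 ≤ n) :
    c.gapLen (c.pk (2 * n)) ≤ c.gapLen (c.pk n) ∧
      c.gapLen (c.pk (2 * n + 1)) ≤ c.gapLen (c.pk n) := by
  have hI := c.invF n hn
  constructor
  · have hm := c.pk_mem (n := 2 * n) (by omega)
    rw [c.F_even' hn] at hm
    exact hI.pick_max _ (hI.subset_left _ hm)
  · have hm := c.pk_mem (n := 2 * n + 1) (by omega)
    rw [c.F_odd' hn] at hm
    exact hI.pick_max _ (hI.subset_right _ hm)

lemma mk'_holeDecr : (c.mk').holeDecr := by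
  intro n hn
  rw [c.mk'_gapLen hn, c.mk'_gapLen (n := 2 * n) (by omega),
    c.mk'_gapLen (n := 2 * n + 1) (by omega)]
  exact c.pk_child_le hn

lemma mk'_density {x : ℝ} (hx : 0 ≤ x) (hd : c.densityGE x) : (c.mk').densityGE x := by
  intro n hn
  have hI := c.invF n hn
  show min ((c.mk').r (2*n) - (c.mk').l (2*n)) ((c.mk').r (2*n+1) - (c.mk').l (2*n+1)) ≥ _
  rw [mk'_l, mk'_r, mk'_l, mk'_r, c.F_even' hn, c.F_odd' hn]
  simp only [ge_iff_le]
  rw [le_min_iff]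
  have hgl : c.l (2 * c.pk n + 1) - c.r (2 * c.pk n) = c.gapLen (c.pk n) := rfl
  rw [hgl]
  constructor
  · refine c.dens_side_L hx hd (c.pk_one_le hn) hI.strict_left ?_
    rcases hI.2.1 with h' | ⟨m, hm, ha, hmax⟩
    · exact Or.inl h'
    · exact Or.inr ⟨m, hm, ha, hmax _ (c.pk_mem hn)⟩
  · refine c.dens_side_R hx hd (c.pk_one_le hn) hI.strict_right ?_
    rcases hI.2.2 with h' | ⟨m, hm, hb, hmax⟩
    · exact Or.inl h'
    · exact Or.inr ⟨m, hm, hb, hmax _ (c.pk_mem hn)⟩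

noncomputable def path (c : CantorConstr) (j : ℕ) : ℕ → ℕ
  | 0 => 1
  | (t+1) =>
      if c.l (2 * j + 1) ≤ c.r (2 * c.pk (path c j t))
      then 2 * path c j t else 2 * path c j t + 1

lemma path_pos (j t : ℕ) : 1 ≤ path c j t := by
  induction t with
  | zero => exact le_rfl
  | succ t ih => rw [path]; split <;> omega

lemma root_inS {j : ℕ} (hj : 1 ≤ j) : c.inS (c.F 1).1 (c.F 1).2 j := by
  rw [c.F_one]
  refine ⟨hj, ?_, ?_⟩
  · have h1 := (c.root_le (i := 2 * j) (by omega)).1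
    have h2 := c.lt (2 * j) (by omega)
    exact le_of_lt (lt_of_le_of_lt h1 h2)
  · have h1 := (c.root_le (i := 2 * j + 1) (by omega)).2
    have h2 := c.lt (2 * j + 1) (by omega)
    linarith

lemma pick_surj {j : ℕ} (hj : 1 ≤ j) : ∃ n, 1 ≤ n ∧ c.pk n = j := by
  by_contra hnone
  push_neg at hnone
  have hne : ∀ n, 1 ≤ n → c.pk n ≠ j := fun n hn => hnone n hn
  -- j stays in S along the path
  have hA : ∀ t, c.inS (c.F (path c j t)).1 (c.F (path c j t)).2 j := by
    intro t
    induction t with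
    | zero => exact c.root_inS hj
    | succ t ih =>
      have hp := c.path_pos j t
      have hI := c.invF _ hp
      have hpkne : c.pk (path c j t) ≠ j := hne _ hp
      have hsep := c.sep hj (c.pk_one_le hp) (fun he => hpkne he.symm)
      rw [path]
      split
      · next hcond =>
          rw [c.F_even' hp]
          exact ⟨hj, ih.2.1, hcond⟩
      · next hcond =>
          push_neg at hcond
          rw [c.F_odd' hp]
          rcases hsep with hs | hs
          · exact absurd (le_of_lt hs) (not_le.mpr hcond)
          · exact ⟨hj, le_of_lt hs, ih.2.2⟩
  -- S shrinks along the path and excludes previous picks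
  have hB : ∀ t j', c.inS (c.F (path c j (t+1))).1 (c.F (path c j (t+1))).2 j' →
      c.inS (c.F (path c j t)).1 (c.F (path c j t)).2 j' ∧ j' ≠ c.pk (path c j t) := by
    intro t j' hj'
    have hp := c.path_pos j t
    have hI := c.invF _ hp
    rw [path] at hj'
    split at hj'
    · rw [c.F_even' hp] at hj'
      exact ⟨hI.subset_left _ hj', hI.pick_not_left _ hj'⟩
    · rw [c.F_odd' hp] at hj'
      exact ⟨hI.subset_right _ hj', hI.pick_not_right _ hj'⟩
  have hC : ∀ t t', t ≤ t' → ∀ j', c.inS (c.F (path c j t')).1 (c.F (path c j t')).2 j' →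
      c.inS (c.F (path c j t)).1 (c.F (path c j t)).2 j' := by
    intro t t' htt'
    induction t' with
    | zero => intro j' h; have : t = 0 := by omega
              subst this; exact h
    | succ t' ih =>
      intro j' h
      rcases Nat.lt_or_ge t (t'+1) with hlt | hge
      · exact ih (by omega) j' (hB t' j' h).1
      · have : t = t' + 1 := by omega
        subst this; exact h
  -- the picks along the path are injective
  set g : ℕ → ℕ := fun t => c.pk (path c j t) with hg
  have hginj : Function.Injective g := by
    have key : ∀ t t', t < t' → g t ≠ g t' := by
      intro t t' hlt heq
      have h1 : c.inS (c.F (path c j t')).1 (c.F (path c j t')).2 (g t') :=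
        c.pk_mem (c.path_pos j t')
      have h2 := hC (t+1) t' (by omega) _ h1
      have h3 := (hB t _ h2).2
      exact h3 heq.symm
    intro t t' heq
    rcases lt_trichotomy t t' with h | h | h
    · exact absurd heq (key t t' h)
    · exact h
    · exact absurd heq.symm (key t' t h)
  have hmem : ∀ t, g t ∈ {i : ℕ | 1 ≤ i ∧ c.gapLen j ≤ c.gapLen i} := by
    intro t
    have hp := c.path_pos j t
    exact ⟨c.pk_one_le hp, (c.invF _ hp).pick_max j (hA t)⟩
  have hinf := Set.infinite_of_injective_forall_mem hginj hmem
  exact hinf (c.finGE (c.gapLen j) (c.gapLen_pos hj))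

lemma mk'_cantorSet : (c.mk').cantorSet = c.cantorSet := by
  unfold cantorSet
  have h1 : (c.mk').l 1 = c.l 1 := by rw [mk'_l, c.F_one]
  have h2 : (c.mk').r 1 = c.r 1 := by rw [mk'_r, c.F_one]
  rw [h1, h2]
  have hU : (⋃ (i : ℕ) (_ : 1 ≤ i), Set.Ioo ((c.mk').r (2 * i)) ((c.mk').l (2 * i + 1))) =
      ⋃ (i : ℕ) (_ : 1 ≤ i), Set.Ioo (c.r (2 * i)) (c.l (2 * i + 1)) := by
    apply le_antisymm
    · refine Set.iUnion₂_subset fun n hn => ?_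
      rw [mk'_l, mk'_r, c.F_even' hn, c.F_odd' hn]
      exact Set.subset_iUnion₂ (s := fun i _ => Set.Ioo (c.r (2*i)) (c.l (2*i+1)))
        (c.pk n) (c.pk_one_le hn)
    · refine Set.iUnion₂_subset fun i hi => ?_
      obtain ⟨n, hn, hpk⟩ := c.pick_surj hi
      have : Set.Ioo (c.r (2 * i)) (c.l (2 * i + 1)) =
          Set.Ioo ((c.mk').r (2 * n)) ((c.mk').l (2 * n + 1)) := by
        rw [mk'_l, mk'_r, c.F_even' hn, c.F_odd' hn, hpk]
      rw [this]
      exact Set.subset_iUnion₂ (s := fun i _ => Set.Ioo ((c.mk').r (2*i)) ((c.mk').l (2*i+1)))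
        n hn
  rw [hU]

end CantorConstr
end

theorem exists_holeDecreasing_same_cantorSet (c : CantorConstr) :
    ∃ c' : CantorConstr, c'.l 1 = c.l 1 ∧ c'.r 1 = c.r 1 ∧ c'.holeDecr ∧
      c'.cantorSet = c.cantorSet ∧
      ∀ x : ℝ, 0 ≤ x → c.densityGE x → c'.densityGE x := by
  refine ⟨c.mk', ?_, ?_, c.mk'_holeDecr, c.mk'_cantorSet, fun x hx hd => c.mk'_density hx hd⟩
  · rw [c.mk'_l, c.F_one]
  · rw [c.mk'_r, c.F_one]
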